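/- arXiv:2304.05715 — 9 statements merged into one kernel-verified Lean document; each statement's English description precedes it below -/
import Mathlib

section
/- Let 0 ≤ s < 1 and let g : [s,1) → ℝ be continuously differentiable and monotonically increasing with g(s) ≥ 0. Let δ > 0 and 0 < ε ≤ 1. Then the exceptional set E = { r ∈ (s,1) : g′(r) > (2/(εδ)) · max{1, g(r)^{1+ε}} } has Lebesgue measure |E| < δ. -/
/-!
Let `φ t = 1 / max 1 (t ^ (1 + ε))` and `Φ y = ∫₀ʸ φ` (`borelWeight`, `borelPotential`). Since
`φ ≤ 1` on `[0, 1]` and `φ t = t ^ (-(1 + ε))` beyond, `Φ ≤ 1 + 1/ε ≤ 2/ε`. The composite `Φ ∘ g`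
is monotone on `[s, 1)`, so by Lebesgue's theorem (`∫ f' ≤ f b - f a` for monotone `f`) its
derivative `φ(g) g'` has integral at most `2/ε` over `(s, 1)`. On the exceptional set this
derivative exceeds `2/(εδ)`, and a strict Markov inequality gives `|E| < δ`.
-/

open MeasureTheory Set
open scoped ENNReal

theorem measure_Ioo_le_of_forall_Ioo_le {μ : Measure ℝ} {a b : ℝ} {B : ℝ≥0∞}
    (h : ∀ t ∈ Ioo a b, μ (Ioo a t) ≤ B) : μ (Ioo a b) ≤ B := by
  have hunion : Ioo a b = ⋃ t : Ioo a b, Ioo a (t : ℝ) := by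
    ext x
    simp only [mem_Ioo, mem_iUnion, Subtype.exists, exists_prop]
    constructor
    · rintro ⟨hax, hxb⟩
      obtain ⟨t, hxt, htb⟩ := exists_between hxb
      exact ⟨t, ⟨hax.trans hxt, htb⟩, hax, hxt⟩
    · rintro ⟨t, ht, hax, hxt⟩
      exact ⟨hax, hxt.trans ht.2⟩
  have hmono : Monotone fun t : Ioo a b => Ioo a (t : ℝ) := fun _ _ htu =>
    Ioo_subset_Ioo_right htu
  rw [hunion, hmono.measure_iUnion]
  exact iSup_le fun t => h t t.2

theorem mul_measure_lt_setLIntegral {α : Type*} [MeasurableSpace α] {μ : Measure α} {s : Set α}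
    {f : α → ℝ≥0∞} {c : ℝ≥0∞} (hs : MeasurableSet s) (hμs : μ s ≠ 0) (hf : Measurable f)
    (hfi : ∫⁻ x in s, f x ∂μ ≠ ⊤) (hlt : ∀ x ∈ s, c < f x) :
    c * μ s < ∫⁻ x in s, f x ∂μ := by
  have hle : ∫⁻ _ in s, c ∂μ ≤ ∫⁻ x in s, f x ∂μ :=
    setLIntegral_mono hf fun x hx => (hlt x hx).le
  rw [← setLIntegral_const]
  exact setLIntegral_strict_mono hs hμs hf (ne_top_of_le_ne_top hfi hle)
    (Filter.Eventually.of_forall hlt)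

theorem measure_sep_lt_of_setLIntegral_le {α : Type*} [MeasurableSpace α] {μ : Measure α}
    {S : Set α} {f : α → ℝ} {B c : ℝ} (hS : MeasurableSet S) (hf : Measurable f) (hc : 0 < c)
    (hB : 0 < B) (hint : ∫⁻ x in S, ENNReal.ofReal (f x) ∂μ ≤ ENNReal.ofReal B) :
    μ {x ∈ S | c < f x} < ENNReal.ofReal (B / c) := by
  set E := {x ∈ S | c < f x}
  rcases eq_or_ne (μ E) 0 with h0 | h0
  · rw [h0]
    exact ENNReal.ofReal_pos.2 (div_pos hB hc)
  have hintE : ∫⁻ x in E, ENNReal.ofReal (f x) ∂μ ≤ ENNReal.ofReal B :=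
    (lintegral_mono_set (sep_subset _ _)).trans hint
  have hmarkov : ENNReal.ofReal c * μ E < ENNReal.ofReal B :=
    (mul_measure_lt_setLIntegral (hS.inter (measurableSet_lt measurable_const hf)) h0
      hf.ennreal_ofReal (ne_top_of_le_ne_top ENNReal.ofReal_ne_top hintE)
      fun x hx => (ENNReal.ofReal_lt_ofReal_iff (hc.trans hx.2)).2 hx.2).trans_le hintE
  rw [← ENNReal.mul_lt_mul_iff_right (ENNReal.ofReal_pos.2 hc).ne' ENNReal.ofReal_ne_top,
    ← ENNReal.ofReal_mul hc.le, mul_div_cancel₀ B hc.ne']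
  exact hmarkov

section MonotoneDeriv

variable {f : ℝ → ℝ} {a b : ℝ}

theorem MonotoneOn.lintegral_Ioo_deriv_le (hab : a ≤ b) (hf : MonotoneOn f (Icc a b)) :
    ∫⁻ x in Ioo a b, ENNReal.ofReal (deriv f x) ≤ ENNReal.ofReal (f b - f a) := by
  rw [← uIcc_of_le hab] at hf
  have hnonneg : ∀ x ∈ Ioo a b, 0 ≤ deriv f x := fun x hx => by
    rw [← derivWithin_of_mem_nhds (Icc_mem_nhds hx.1 hx.2), ← uIcc_of_le hab]
    exact hf.derivWithin_nonneg
  rw [← ofReal_integral_eq_lintegral_ofReal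
    (hf.intervalIntegrable_deriv.1.mono_set Ioo_subset_Ioc_self)
    (ae_restrict_of_forall_mem measurableSet_Ioo hnonneg),
    ← integral_Ioc_eq_integral_Ioo, ← intervalIntegral.integral_of_le hab]
  have hfab : 0 ≤ f b - f a := sub_nonneg.2 (hf left_mem_uIcc right_mem_uIcc hab)
  have hmem := hf.intervalIntegral_deriv_mem_uIcc
  rw [uIcc_of_le hfab] at hmem
  exact ENNReal.ofReal_le_ofReal hmem.2

theorem MonotoneOn.lintegral_Ioo_deriv_le_of_le {M : ℝ} (hf : MonotoneOn f (Ico a b))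
    (hM : ∀ x ∈ Ico a b, f x ≤ M) :
    ∫⁻ x in Ioo a b, ENNReal.ofReal (deriv f x) ≤ ENNReal.ofReal (M - f a) := by
  rw [← withDensity_apply _ measurableSet_Ioo]
  refine measure_Ioo_le_of_forall_Ioo_le fun t ht => ?_
  have hsub : Icc a t ⊆ Ico a b := Icc_subset_Ico_right ht.2
  rw [withDensity_apply _ measurableSet_Ioo]
  calc ∫⁻ x in Ioo a t, ENNReal.ofReal (deriv f x)
      ≤ ENNReal.ofReal (f t - f a) := (hf.mono hsub).lintegral_Ioo_deriv_le ht.1.le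
    _ ≤ ENNReal.ofReal (M - f a) := by
      gcongr
      exact hM t (hsub (right_mem_Icc.2 ht.1.le))

end MonotoneDeriv

section Potential

variable {ε : ℝ}

noncomputable def borelWeight (ε t : ℝ) : ℝ := (max 1 (t ^ (1 + ε)))⁻¹

noncomputable def borelPotential (ε y : ℝ) : ℝ := ∫ t in (0 : ℝ)..y, borelWeight ε t

theorem borelWeight_pos (ε t : ℝ) : 0 < borelWeight ε t :=
  inv_pos.2 (lt_max_of_lt_left one_pos)

theorem borelWeight_le_one (ε t : ℝ) : borelWeight ε t ≤ 1 :=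
  inv_le_one_of_one_le₀ (le_max_left _ _)

theorem borelWeight_of_one_le (hε : 0 ≤ ε) {t : ℝ} (ht : 1 ≤ t) :
    borelWeight ε t = t ^ (-(1 + ε)) := by
  rw [borelWeight, max_eq_right (Real.one_le_rpow ht (by linarith)),
    Real.rpow_neg (by linarith)]

theorem continuous_borelWeight (hε : 0 ≤ ε) : Continuous (borelWeight ε) :=
  (continuous_const.max (Real.continuous_rpow_const (by linarith))).inv₀ fun t =>
    (lt_max_of_lt_left one_pos).ne'

theorem hasDerivAt_borelPotential (hε : 0 ≤ ε) (y : ℝ) :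
    HasDerivAt (borelPotential ε) (borelWeight ε y) y :=
  ((continuous_borelWeight hε).integral_hasStrictDerivAt 0 y).hasDerivAt

theorem monotone_borelPotential (hε : 0 ≤ ε) : Monotone (borelPotential ε) :=
  monotone_of_hasDerivAt_nonneg (hasDerivAt_borelPotential hε) fun t => (borelWeight_pos ε t).le

theorem borelPotential_nonneg (hε : 0 ≤ ε) {y : ℝ} (hy : 0 ≤ y) : 0 ≤ borelPotential ε y := by
  simpa [borelPotential] using monotone_borelPotential hε hy

theorem integral_from_one_rpow_neg_one_sub (hε : 0 < ε) {y : ℝ} (hy : 1 ≤ y) :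
    ∫ t in (1 : ℝ)..y, t ^ (-(1 + ε)) = (1 - y ^ (-ε)) / ε := by
  rw [integral_rpow (Or.inr ⟨by linarith, by simp [uIcc_of_le hy]⟩),
    show -(1 + ε) + 1 = -ε by ring, Real.one_rpow]
  field_simp
  ring

theorem borelPotential_le (hε : 0 < ε) (y : ℝ) : borelPotential ε y ≤ 1 + 1 / ε := by
  have hint : ∀ a b, IntervalIntegrable (borelWeight ε) volume a b := fun a b =>
    (continuous_borelWeight hε.le).intervalIntegrable a b
  set Y := max y 1
  have hY : 1 ≤ Y := le_max_right y 1
  have hhead : borelPotential ε 1 ≤ 1 := by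
    simpa [borelPotential] using intervalIntegral.integral_mono_on zero_le_one (hint 0 1)
      intervalIntegrable_const fun t _ => borelWeight_le_one ε t
  have htail : ∫ t in (1 : ℝ)..Y, borelWeight ε t = (1 - Y ^ (-ε)) / ε := by
    rw [← integral_from_one_rpow_neg_one_sub hε hY]
    refine intervalIntegral.integral_congr fun t ht => borelWeight_of_one_le hε.le ?_
    rw [uIcc_of_le hY] at ht
    exact ht.1
  have hYε : 0 ≤ Y ^ (-ε) := Real.rpow_nonneg (by linarith) _
  calc borelPotential ε y ≤ borelPotential ε Y := monotone_borelPotential hε.le (le_max_left y 1)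
    _ = borelPotential ε 1 + (1 - Y ^ (-ε)) / ε := by
      rw [← htail, borelPotential, borelPotential,
        intervalIntegral.integral_add_adjacent_intervals (hint 0 1) (hint 1 Y)]
    _ ≤ 1 + 1 / ε := by gcongr; linarith

theorem HasDerivAt.borelPotential_comp (hε : 0 ≤ ε) {g : ℝ → ℝ} {g' r : ℝ}
    (hg : HasDerivAt g g' r) :
    HasDerivAt (borelPotential ε ∘ g) (borelWeight ε (g r) * g') r :=
  (hasDerivAt_borelPotential hε (g r)).comp r hg

end Potential

theorem lintegral_deriv_borelPotential_comp_le {ε s : ℝ} {g : ℝ → ℝ} (hε : 0 < ε)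
    (hmono : MonotoneOn g (Ico s 1)) (hgs : 0 ≤ g s) :
    ∫⁻ r in Ioo s 1, ENNReal.ofReal (deriv (borelPotential ε ∘ g) r) ≤
      ENNReal.ofReal (1 + 1 / ε) :=
  ((monotone_borelPotential hε.le).comp_monotoneOn hmono).lintegral_Ioo_deriv_le_of_le
    (fun r _ => borelPotential_le hε (g r)) |>.trans <|
    ENNReal.ofReal_le_ofReal (sub_le_self _ (borelPotential_nonneg hε.le hgs))

theorem stmt3_general (s : ℝ) (g g' : ℝ → ℝ)
    (hderiv : ∀ r ∈ Set.Ico s 1, HasDerivWithinAt g (g' r) (Set.Ico s 1) r)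
    (hmono : MonotoneOn g (Set.Ico s 1))
    (hgs : 0 ≤ g s)
    (δ ε : ℝ) (hδ : 0 < δ) (hε0 : 0 < ε) (hε1 : ε ≤ 1) :
    volume {r ∈ Set.Ioo s 1 | 2 / (ε * δ) * max 1 (g r ^ (1 + ε)) < g' r}
      < ENNReal.ofReal δ := by
  set H := borelPotential ε ∘ g
  have hE : {r ∈ Ioo s 1 | 2 / (ε * δ) * max 1 (g r ^ (1 + ε)) < g' r} =
      {r ∈ Ioo s 1 | 2 / (ε * δ) < deriv H r} := by
    ext r
    refine and_congr_right fun hr => ?_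
    have hg := (hderiv r (Ioo_subset_Ico_self hr)).hasDerivAt (Ico_mem_nhds hr.1 hr.2)
    rw [(hg.borelPotential_comp hε0.le).deriv, borelWeight,
      lt_inv_mul_iff₀ (lt_max_of_lt_left one_pos), mul_comm]
  have hint : ∫⁻ r in Ioo s 1, ENNReal.ofReal (deriv H r) ≤ ENNReal.ofReal (2 / ε) :=
    (lintegral_deriv_borelPotential_comp_le hε0 hmono hgs).trans <| ENNReal.ofReal_le_ofReal <| by
      linarith [one_le_one_div hε0 hε1, show 2 / ε = 1 / ε + 1 / ε by ring]
  rw [hE]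
  convert measure_sep_lt_of_setLIntegral_le (c := 2 / (ε * δ)) measurableSet_Ioo
    (measurable_deriv H) (by positivity) (by positivity) hint using 2
  field_simp

/-- **Borel growth lemma.** If `g` is continuously differentiable and increasing on `[s,1)`
with `g s ≥ 0`, then for `δ > 0` and `0 < ε ≤ 1` the set of `r ∈ (s,1)` where
`g' r > (2/(εδ)) · max 1 (g r ^ (1+ε))` has Lebesgue measure less than `δ`. -/
theorem stmt3 (s : ℝ) (hs0 : 0 ≤ s) (hs1 : s < 1) (g g' : ℝ → ℝ)
    (hderiv : ∀ r ∈ Set.Ico s 1, HasDerivWithinAt g (g' r) (Set.Ico s 1) r)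
    (hcont : ContinuousOn g' (Set.Ico s 1))
    (hmono : MonotoneOn g (Set.Ico s 1))
    (hgs : 0 ≤ g s)
    (δ ε : ℝ) (hδ : 0 < δ) (hε0 : 0 < ε) (hε1 : ε ≤ 1) :
    volume {r ∈ Set.Ioo s 1 | 2 / (ε * δ) * max 1 (g r ^ (1 + ε)) < g' r}
      < ENNReal.ofReal δ :=
  stmt3_general s g g' hderiv hmono hgs δ ε hδ hε0 hε1
end

section
/- Let 0 < σ < r < 1 and let w ∈ ℂ with |w| < σ. Let Λ be a nonnegative Borel measurable function on the circle {z ∈ ℂ : |z| = r}, with values in [0,∞]. Then ((r−σ)/(r+σ)) · ∫₀^{2π} Λ(φ_{w,r}(r e^{iθ})) dθ/(2π) ≤ ∫₀^{2π} Λ(r e^{iθ}) dθ/(2π) ≤ ((r+σ)/(r−σ)) · ∫₀^{2π} Λ(φ_{w,r}(r e^{iθ})) dθ/(2π). -/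
/-!
Put `u θ = r - w e^{-iθ}` (`circleFactor`), so that `r e^{iθ} - w = e^{iθ} u θ` and
`φ_{w,r}(r e^{iθ}) = -r e^{iθ} u θ / conj (u θ)`. As `|w| < r`, `u θ` lies in the right
half-plane, hence `φ_{w,r}(r e^{iθ}) = r e^{i T θ}` for the smooth lift
`T θ = θ + π + 2 arg (u θ)`, which satisfies `T (θ + 2π) = T θ + 2π`. Its derivative
`T' θ = (r² - |w|²) / |r e^{iθ} - w|²` is the Poisson kernel, so by Harnack's bounds it lies
between `(r - |w|)/(r + |w|)` and `(r + |w|)/(r - |w|)`. Substituting `θ ↦ T θ` and using the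
`2π`-periodicity of `θ ↦ Λ (r e^{iθ})` gives
`∫ Λ (r e^{iθ}) dθ = ∫ T' θ · Λ (φ_{w,r}(r e^{iθ})) dθ` over a period.
-/

open scoped ENNReal
open MeasureTheory

/-- The disc automorphism `φ_{w,r}(z) = r²(w − z)/(r² − conj w · z)` of `𝔻(r)`. -/
noncomputable def phi (w : ℂ) (r : ℝ) (z : ℂ) : ℂ :=
  (r : ℂ) ^ 2 * (w - z) / ((r : ℂ) ^ 2 - (starRingEnd ℂ) w * z)

open scoped ComplexConjugate Real
open Set Complex

theorem Function.Periodic.setLIntegral_Ioc_add_eq {f : ℝ → ℝ≥0∞} {T : ℝ}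
    (hf : f.Periodic T) (hT : 0 < T) (s t : ℝ) :
    ∫⁻ x in Ioc s (s + T), f x = ∫⁻ x in Ioc t (t + T), f x := by
  have : Fact (0 < T) := ⟨hT⟩
  simp only [← hf.lift_coe]
  rw [AddCircle.lintegral_preimage, AddCircle.lintegral_preimage]

theorem HasDerivAt.arg_real {u : ℝ → ℂ} {u' : ℂ} {x : ℝ} (hu : HasDerivAt u u' x)
    (hx : u x ∈ slitPlane) : HasDerivAt (fun t => arg (u t)) (u' / u x).im x := by
  simpa only [Function.comp_def, imCLM_apply, log_im] using
    imCLM.hasFDerivAt.comp_hasDerivAt x (hu.clog_real hx)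

theorem Complex.exp_arg_mul_I_sq {z : ℂ} (hz : z ≠ 0) :
    exp (arg z * I) ^ 2 = z / conj z := by
  have hn : (‖z‖ : ℂ) ≠ 0 := by simpa using hz
  have he : exp (arg z * I) = z / ‖z‖ := by
    rw [eq_div_iff hn, mul_comm, norm_mul_exp_arg_mul_I]
  rw [he, div_pow, ← mul_conj']
  field_simp

noncomputable def circleFactor (w : ℂ) (r θ : ℝ) : ℂ := r - w * exp (-(θ * I))

noncomputable def boundaryAngle (w : ℂ) (r θ : ℝ) : ℝ :=
  θ + π + 2 * arg (circleFactor w r θ)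

noncomputable def boundaryAngleDeriv (w : ℂ) (r θ : ℝ) : ℝ :=
  (r ^ 2 - ‖w‖ ^ 2) / ‖circleFactor w r θ‖ ^ 2

section
variable {w : ℂ} {r : ℝ}

theorem norm_sub_circleFactor (θ : ℝ) : ‖(r : ℂ) - circleFactor w r θ‖ = ‖w‖ := by
  rw [circleFactor, sub_sub_cancel, norm_mul, ← neg_mul, ← ofReal_neg, norm_exp_ofReal_mul_I,
    mul_one]

theorem circleFactor_mem_slitPlane (hwr : ‖w‖ < r) (θ : ℝ) :
    circleFactor w r θ ∈ slitPlane := by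
  have h := re_le_norm ((r : ℂ) - circleFactor w r θ)
  rw [norm_sub_circleFactor, sub_re, ofReal_re] at h
  exact mem_slitPlane_iff.2 (Or.inl (by linarith))

theorem circleFactor_add_two_pi (θ : ℝ) :
    circleFactor w r (θ + 2 * π) = circleFactor w r θ := by
  have h : -(((θ + 2 * π : ℝ) : ℂ) * I) = -(θ * I) - 2 * π * I := by push_cast; ring
  rw [circleFactor, circleFactor, h, exp_periodic.sub_eq]

theorem phi_ofReal_mul_exp (hwr : ‖w‖ < r) (θ : ℝ) :
    phi w r (r * exp (θ * I)) = r * exp (boundaryAngle w r θ * I) := by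
  have hu := slitPlane_ne_zero (circleFactor_mem_slitPlane hwr θ)
  have hexp : exp (boundaryAngle w r θ * I) =
      -exp (θ * I) * (circleFactor w r θ / conj (circleFactor w r θ)) := by
    rw [← exp_arg_mul_I_sq hu, ← exp_nat_mul, boundaryAngle]
    push_cast
    rw [add_mul, add_mul, exp_add, exp_add, exp_pi_mul_I]
    ring_nf
  have hconj : conj (circleFactor w r θ) = r - conj w * exp (θ * I) := by
    simp [circleFactor, ← exp_conj]
  have hc : conj (circleFactor w r θ) ≠ 0 := by simpa using hu
  rw [hexp, phi, hconj, circleFactor, exp_neg]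
  rw [hconj] at hc
  field_simp
  ring

theorem hasDerivAt_circleFactor (θ : ℝ) :
    HasDerivAt (circleFactor w r) (I * (r - circleFactor w r θ)) θ := by
  have h := ((((hasDerivAt_id θ).ofReal_comp).mul_const I).neg.cexp.const_mul w).const_sub
    (r : ℂ)
  refine h.congr_deriv ?_
  simp only [circleFactor, sub_sub_cancel, Pi.neg_apply, id, ofReal_one]
  ring

theorem hasDerivAt_boundaryAngle (hwr : ‖w‖ < r) (θ : ℝ) :
    HasDerivAt (boundaryAngle w r) (boundaryAngleDeriv w r θ) θ := by
  have h : HasDerivAt (boundaryAngle w r)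
      (1 + 2 * (I * (r - circleFactor w r θ) / circleFactor w r θ).im) θ :=
    ((hasDerivAt_id θ).add_const π).add
      (((hasDerivAt_circleFactor θ).arg_real (circleFactor_mem_slitPlane hwr θ)).const_mul 2)
  refine h.congr_deriv ?_
  rw [boundaryAngleDeriv, ← norm_sub_circleFactor θ]
  have hu := slitPlane_ne_zero (circleFactor_mem_slitPlane hwr θ)
  generalize circleFactor w r θ = u at hu ⊢
  have hn : u.re ^ 2 + u.im ^ 2 ≠ 0 := by
    rw [sq, sq, ← normSq_apply]; exact (normSq_pos.2 hu).ne'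
  simp only [div_im, mul_im, mul_re, sub_im, sub_re, ofReal_im, ofReal_re, I_re, I_im,
    Complex.sq_norm, normSq_apply]
  field_simp
  ring

theorem norm_circleFactor_mem_Icc (hr : 0 ≤ r) (θ : ℝ) :
    ‖circleFactor w r θ‖ ∈ Icc (r - ‖w‖) (r + ‖w‖) := by
  have h := norm_sub_circleFactor (w := w) (r := r) θ
  have h₁ := norm_sub_norm_le (r : ℂ) ((r : ℂ) - circleFactor w r θ)
  have h₂ := norm_sub_le (r : ℂ) ((r : ℂ) - circleFactor w r θ)
  rw [sub_sub_cancel, h, norm_real, Real.norm_of_nonneg hr] at h₁ h₂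
  exact ⟨by linarith, h₂⟩

theorem boundaryAngleDeriv_mem_Icc {σ : ℝ} (hw : ‖w‖ < σ) (hσr : σ < r) (θ : ℝ) :
    boundaryAngleDeriv w r θ ∈ Icc ((r - σ) / (r + σ)) ((r + σ) / (r - σ)) := by
  rw [boundaryAngleDeriv]
  obtain ⟨hlo, hhi⟩ := norm_circleFactor_mem_Icc (w := w) (r := r)
    (by linarith [norm_nonneg w]) θ
  set s := ‖w‖
  have hrs : 0 < r - s := by linarith
  have hu : 0 < ‖circleFactor w r θ‖ := by linarith
  have hrs' : 0 < r + s := by linarith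
  have hsq : 0 ≤ r ^ 2 - s ^ 2 := by nlinarith
  constructor
  · calc (r - σ) / (r + σ) ≤ (r - s) / (r + s) := by
          rw [div_le_div_iff₀ (by linarith) hrs']; nlinarith
      _ = (r ^ 2 - s ^ 2) / (r + s) ^ 2 := by
          rw [div_eq_div_iff hrs'.ne' (by positivity)]; ring
      _ ≤ _ := by gcongr
  · calc (r ^ 2 - s ^ 2) / ‖circleFactor w r θ‖ ^ 2 ≤ (r ^ 2 - s ^ 2) / (r - s) ^ 2 := by
          gcongr
      _ = (r + s) / (r - s) := by
          rw [div_eq_div_iff (by positivity) hrs.ne']; ring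
      _ ≤ (r + σ) / (r - σ) := by
          rw [div_le_div_iff₀ hrs (by linarith)]; nlinarith

theorem boundaryAngleDeriv_pos (hwr : ‖w‖ < r) (θ : ℝ) : 0 < boundaryAngleDeriv w r θ := by
  refine div_pos ?_ ?_
  · nlinarith [norm_nonneg w]
  · exact pow_pos (norm_pos_iff.2 (slitPlane_ne_zero (circleFactor_mem_slitPlane hwr θ))) 2

theorem strictMono_boundaryAngle (hwr : ‖w‖ < r) : StrictMono (boundaryAngle w r) :=
  strictMono_of_hasDerivAt_pos (hasDerivAt_boundaryAngle hwr) (boundaryAngleDeriv_pos hwr)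

theorem image_boundaryAngle_Ioc (hwr : ‖w‖ < r) :
    boundaryAngle w r '' Ioc 0 (2 * π) =
      Ioc (boundaryAngle w r 0) (boundaryAngle w r 0 + 2 * π) := by
  have hperiod : boundaryAngle w r (0 + 2 * π) = boundaryAngle w r 0 + 2 * π := by
    rw [boundaryAngle, boundaryAngle, circleFactor_add_two_pi]; ring
  rw [← hperiod, zero_add]
  exact Continuous.image_Ioc_of_strictMono
    (continuous_iff_continuousAt.2 fun θ => (hasDerivAt_boundaryAngle hwr θ).continuousAt)
    (strictMono_boundaryAngle hwr)

theorem lintegral_circle_eq_lintegral_phi (hwr : ‖w‖ < r) (Λ : ℂ → ℝ≥0∞) :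
    ∫⁻ θ in Ioc 0 (2 * π), Λ (r * exp (θ * I)) =
      ∫⁻ θ in Ioc 0 (2 * π), ENNReal.ofReal (boundaryAngleDeriv w r θ) *
        Λ (phi w r (r * exp (θ * I))) := by
  have hperiodic : Function.Periodic (fun θ : ℝ => Λ (r * exp (θ * I))) (2 * π) :=
    fun θ => by simpa using congrArg (fun z => Λ (r * z)) (exp_mul_I_periodic (θ : ℂ))
  calc ∫⁻ θ in Ioc 0 (2 * π), Λ (r * exp (θ * I))
      = ∫⁻ θ in Ioc (boundaryAngle w r 0) (boundaryAngle w r 0 + 2 * π),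
          Λ (r * exp (θ * I)) := by
        simpa using hperiodic.setLIntegral_Ioc_add_eq Real.two_pi_pos 0 (boundaryAngle w r 0)
    _ = ∫⁻ θ in boundaryAngle w r '' Ioc 0 (2 * π), Λ (r * exp (θ * I)) := by
        rw [image_boundaryAngle_Ioc hwr]
    _ = ∫⁻ θ in Ioc 0 (2 * π), ENNReal.ofReal |boundaryAngleDeriv w r θ| *
          Λ (r * exp (boundaryAngle w r θ * I)) :=
        lintegral_image_eq_lintegral_abs_deriv_mul measurableSet_Ioc
          (fun θ _ => (hasDerivAt_boundaryAngle hwr θ).hasDerivWithinAt)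
          (strictMono_boundaryAngle hwr).injective.injOn _
    _ = _ := by
        refine lintegral_congr fun θ => ?_
        rw [abs_of_pos (boundaryAngleDeriv_pos hwr θ), phi_ofReal_mul_exp hwr]

theorem ofReal_mul_lintegral_phi_le {σ : ℝ} (hw : ‖w‖ < σ) (hσr : σ < r)
    (Λ : ℂ → ℝ≥0∞) :
    ENNReal.ofReal ((r - σ) / (r + σ)) *
        ∫⁻ θ in Ioc 0 (2 * π), Λ (phi w r (r * exp (θ * I))) ≤
      ∫⁻ θ in Ioc 0 (2 * π), Λ (r * exp (θ * I)) := by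
  rw [lintegral_circle_eq_lintegral_phi (hw.trans hσr),
    ← lintegral_const_mul' _ _ ENNReal.ofReal_ne_top]
  exact lintegral_mono fun θ =>
    mul_le_mul_left (ENNReal.ofReal_le_ofReal (boundaryAngleDeriv_mem_Icc hw hσr θ).1) _

theorem lintegral_circle_le_ofReal_mul {σ : ℝ} (hw : ‖w‖ < σ) (hσr : σ < r)
    (Λ : ℂ → ℝ≥0∞) :
    ∫⁻ θ in Ioc 0 (2 * π), Λ (r * exp (θ * I)) ≤
      ENNReal.ofReal ((r + σ) / (r - σ)) *
        ∫⁻ θ in Ioc 0 (2 * π), Λ (phi w r (r * exp (θ * I))) := by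
  rw [lintegral_circle_eq_lintegral_phi (hw.trans hσr),
    ← lintegral_const_mul' _ _ ENNReal.ofReal_ne_top]
  exact lintegral_mono fun θ =>
    mul_le_mul_left (ENNReal.ofReal_le_ofReal (boundaryAngleDeriv_mem_Icc hw hσr θ).2) _

end

theorem stmt4_general (σ r : ℝ) (hσr : σ < r)
    (w : ℂ) (hw : ‖w‖ < σ)
    (Λ : ℂ → ℝ≥0∞) :
    ENNReal.ofReal ((r - σ) / (r + σ)) *
        ((∫⁻ θ in Set.Ioc (0 : ℝ) (2 * Real.pi),
            Λ (phi w r (r * Complex.exp (θ * Complex.I)))) / ENNReal.ofReal (2 * Real.pi)) ≤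
      (∫⁻ θ in Set.Ioc (0 : ℝ) (2 * Real.pi),
          Λ (r * Complex.exp (θ * Complex.I))) / ENNReal.ofReal (2 * Real.pi) ∧
    (∫⁻ θ in Set.Ioc (0 : ℝ) (2 * Real.pi),
        Λ (r * Complex.exp (θ * Complex.I))) / ENNReal.ofReal (2 * Real.pi) ≤
      ENNReal.ofReal ((r + σ) / (r - σ)) *
        ((∫⁻ θ in Set.Ioc (0 : ℝ) (2 * Real.pi),
            Λ (phi w r (r * Complex.exp (θ * Complex.I)))) / ENNReal.ofReal (2 * Real.pi)) := by
  simp only [← mul_div_assoc]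
  exact ⟨ENNReal.div_le_div_right (ofReal_mul_lintegral_phi_le hw hσr Λ) _,
    ENNReal.div_le_div_right (lintegral_circle_le_ofReal_mul hw hσr Λ) _⟩

/-- Comparison of the mean of a nonnegative function on the circle `{|z| = r}` with the
mean of its composition with the automorphism `φ_{w,r}`, for `|w| < σ < r < 1`. -/
theorem stmt4 (σ r : ℝ) (hσ0 : 0 < σ) (hσr : σ < r) (hr1 : r < 1)
    (w : ℂ) (hw : ‖w‖ < σ)
    (Λ : ℂ → ℝ≥0∞) (hΛ : Measurable Λ) :
    ENNReal.ofReal ((r - σ) / (r + σ)) *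
        ((∫⁻ θ in Set.Ioc (0 : ℝ) (2 * Real.pi),
            Λ (phi w r (r * Complex.exp (θ * Complex.I)))) / ENNReal.ofReal (2 * Real.pi)) ≤
      (∫⁻ θ in Set.Ioc (0 : ℝ) (2 * Real.pi),
          Λ (r * Complex.exp (θ * Complex.I))) / ENNReal.ofReal (2 * Real.pi) ∧
    (∫⁻ θ in Set.Ioc (0 : ℝ) (2 * Real.pi),
        Λ (r * Complex.exp (θ * Complex.I))) / ENNReal.ofReal (2 * Real.pi) ≤
      ENNReal.ofReal ((r + σ) / (r - σ)) *
        ((∫⁻ θ in Set.Ioc (0 : ℝ) (2 * Real.pi),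
            Λ (phi w r (r * Complex.exp (θ * Complex.I)))) / ENNReal.ofReal (2 * Real.pi)) :=
  stmt4_general σ r hσr w hw Λ
end

section
/- Let 0 < σ < s < r < 1, let μ be a Borel measure on 𝔻(r) (with values in [0,∞]), and let w ∈ 𝔻(σ). Define T_s(r,μ) = ∫_s^r μ(𝔻(t)) dt/t and T_s^w(r,μ) = ∫_s^r μ(φ_{w,r}(𝔻(t))) dt/t, where φ_{w,r}(𝔻(t)) denotes the image of 𝔻(t) under φ_{w,r}. Then (s(s−σ)/(s+σ)) · T_s^w(r,μ) ≤ T_s(r,μ) ≤ ((s+σ)/(s(s−σ))) · T_s^w(r,μ). -/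
/-!
For `‖w‖ < σ` and `‖z‖ < t ≤ r` one has `‖φ_{w,r} z‖ < A(t) := r²(σ + t)/(r² + σt)`, and
`φ_{w,r}` is an involution, so `φ_{w,r}(𝔻(t)) ⊆ 𝔻(A(t))` and `𝔻(t) ⊆ φ_{w,r}(𝔻(A(t)))`. Hence each
of `T_s(r,μ)`, `T_s^w(r,μ)` is at most `∫_s^r H(A(t)) dt/t`, `H` being the integrand of the other.
As `A` maps `(s, r)` into itself, the substitution `u = A(t)` bounds this by `∫_s^r H(u) J(u) du`,
where `J` is the logarithmic derivative of `A⁻¹`; finally `u J(u) ≤ (s + σ)/(s − σ)` on `(s, r)`,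
and this constant is at most `(s + σ)/(s(s − σ))` because `s < 1`.
-/

open scoped ENNReal
open MeasureTheory

open Set

/-- `r · (a/r ⊕ b/r)` for the addition `x ⊕ y = (x + y)/(1 + xy)` of hyperbolic tangents: the sharp
bound for `‖φ_{w,r} z‖` in terms of `‖w‖` and `‖z‖`. -/
noncomputable def discAdd (r a b : ℝ) : ℝ := r ^ 2 * (a + b) / (r ^ 2 + a * b)

section discAdd

variable {r a b c d : ℝ}

lemma discAdd_lt_discAdd (ha : 0 ≤ a) (hb : 0 ≤ b) (hac : a ≤ c) (hbd : b < d) (hcr : c < r)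
    (hdr : d ≤ r) : discAdd r a b < discAdd r c d := by
  have hbd' : b * d < r ^ 2 := by nlinarith
  have hac' : a * c < r ^ 2 := by nlinarith
  have hr : 0 < r := by linarith
  have key : 0 < (c + d) * (r ^ 2 + a * b) - (a + b) * (r ^ 2 + c * d) := by
    have : (c + d) * (r ^ 2 + a * b) - (a + b) * (r ^ 2 + c * d) =
        (c - a) * (r ^ 2 - b * d) + (d - b) * (r ^ 2 - a * c) := by ring
    rw [this]
    nlinarith [mul_nonneg (sub_nonneg.2 hac) (sub_pos.2 hbd').le,
      mul_pos (sub_pos.2 hbd) (sub_pos.2 hac')]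
  unfold discAdd
  rw [div_lt_div_iff₀ (by positivity) (by nlinarith)]
  nlinarith [mul_pos (pow_pos hr 2) key]

lemma discAdd_mem_Ioo {s t : ℝ} (hc : 0 ≤ c) (hcr : c < r) (hs : 0 ≤ s) (ht : t ∈ Ioo s r) :
    discAdd r c t ∈ Ioo s r := by
  have hden : 0 < r ^ 2 + c * t := by nlinarith [ht.1]
  unfold discAdd
  constructor
  · rw [lt_div_iff₀ hden]
    nlinarith [mul_nonneg hc (by nlinarith [ht.1, ht.2] : 0 ≤ r ^ 2 - t ^ 2), ht.1]
  · rw [div_lt_iff₀ hden]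
    nlinarith [mul_pos (sub_pos.2 hcr) (sub_pos.2 ht.2)]

lemma hasDerivAt_discAdd (h : r ^ 2 + c * b ≠ 0) :
    HasDerivAt (discAdd r c) (r ^ 2 * (r ^ 2 - c ^ 2) / (r ^ 2 + c * b) ^ 2) b := by
  have hnum : HasDerivAt (fun t => r ^ 2 * (c + t)) (r ^ 2) b := by
    simpa using ((hasDerivAt_id b).const_add c).const_mul (r ^ 2)
  have hden : HasDerivAt (fun t => r ^ 2 + c * t) c b := by
    simpa using ((hasDerivAt_id b).const_mul c).const_add (r ^ 2)
  exact (hnum.div hden h).congr_deriv (by ring)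

end discAdd

section phi

variable {w z : ℂ} {r : ℝ}

lemma norm_sq_sub_conj_mul (w z : ℂ) (r : ℝ) :
    ‖(r : ℂ) ^ 2 - (starRingEnd ℂ) w * z‖ ^ 2 =
      r ^ 2 * ‖w - z‖ ^ 2 + (r ^ 2 - ‖w‖ ^ 2) * (r ^ 2 - ‖z‖ ^ 2) := by
  simp [Complex.sq_norm, Complex.normSq_apply, ← Complex.ofReal_pow]
  ring

lemma norm_phi_le_discAdd (hw : ‖w‖ < r) (hz : ‖z‖ < r) :
    ‖phi w r z‖ ≤ discAdd r ‖w‖ ‖z‖ := by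
  set a := ‖w‖
  set b := ‖z‖
  set D := ‖(r : ℂ) ^ 2 - (starRingEnd ℂ) w * z‖
  set N := ‖w - z‖
  set P := (r ^ 2 - a ^ 2) * (r ^ 2 - b ^ 2)
  have hD2 : D ^ 2 = r ^ 2 * N ^ 2 + P := norm_sq_sub_conj_mul w z r
  have hP : 0 < P := mul_pos (by nlinarith [norm_nonneg w]) (by nlinarith [norm_nonneg z])
  have hD : 0 < D := by nlinarith [norm_nonneg ((r : ℂ) ^ 2 - (starRingEnd ℂ) w * z)]
  have hDle : D ≤ r ^ 2 + a * b := by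
    refine (norm_sub_le _ _).trans_eq ?_
    simp [a, b]
  -- Since `(r² + ab)² − r²(a + b)² = P`, the squared claim reduces to `D ≤ r² + ab`.
  have hsq : r ^ 2 * (N * (r ^ 2 + a * b)) ^ 2 ≤ r ^ 2 * ((a + b) * D) ^ 2 := by
    have : r ^ 2 * ((a + b) * D) ^ 2 - r ^ 2 * (N * (r ^ 2 + a * b)) ^ 2 =
        P * ((r ^ 2 + a * b) ^ 2 - D ^ 2) := by linear_combination (r ^ 2 + a * b) ^ 2 * hD2
    nlinarith [mul_nonneg hP.le (sub_nonneg.2 (pow_le_pow_left₀ hD.le hDle 2))]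
  have hr : 0 < r ^ 2 := by nlinarith [norm_nonneg w]
  have hle : N * (r ^ 2 + a * b) ≤ (a + b) * D :=
    le_of_pow_le_pow_left₀ two_ne_zero (by positivity) (le_of_mul_le_mul_left hsq hr)
  rw [phi, norm_div, norm_mul, discAdd, div_le_div_iff₀ hD (by positivity)]
  simp only [norm_pow, Complex.norm_real, Real.norm_eq_abs, sq_abs]
  nlinarith [mul_le_mul_of_nonneg_left hle hr.le]

lemma sq_sub_conj_mul_ne_zero (hw : ‖w‖ < r) (hz : ‖z‖ < r) :
    (r : ℂ) ^ 2 - (starRingEnd ℂ) w * z ≠ 0 := by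
  intro h
  have hD2 := norm_sq_sub_conj_mul w z r
  rw [h, norm_zero] at hD2
  have hP : 0 < (r ^ 2 - ‖w‖ ^ 2) * (r ^ 2 - ‖z‖ ^ 2) :=
    mul_pos (by nlinarith [norm_nonneg w]) (by nlinarith [norm_nonneg z])
  nlinarith [mul_nonneg (sq_nonneg r) (sq_nonneg ‖w - z‖)]

lemma phi_phi (hw : ‖w‖ < r) (hz : ‖z‖ < r) : phi w r (phi w r z) = z := by
  have hwz : (r : ℂ) ^ 2 - z * (starRingEnd ℂ) w ≠ 0 := by
    rw [mul_comm]; exact sq_sub_conj_mul_ne_zero hw hz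
  have hr : (r : ℂ) ≠ 0 := Complex.ofReal_ne_zero.2 (by linarith [norm_nonneg w])
  have hww := sq_sub_conj_mul_ne_zero hw hw
  unfold phi
  field_simp
  rw [show (r : ℂ) ^ 2 - z * (starRingEnd ℂ) w - (w - z) * (starRingEnd ℂ) w =
    (r : ℂ) ^ 2 - (starRingEnd ℂ) w * w by ring, div_eq_iff hww]
  ring

end phi

section ball

variable {w : ℂ} {σ r t : ℝ}

lemma image_phi_ball_subset (hw : ‖w‖ < σ) (hσr : σ < r) (htr : t ≤ r) :
    phi w r '' Metric.ball 0 t ⊆ Metric.ball 0 (discAdd r σ t) := by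
  rintro _ ⟨z, hz, rfl⟩
  rw [mem_ball_zero_iff] at hz ⊢
  exact (norm_phi_le_discAdd (hw.trans hσr) (hz.trans_le htr)).trans_lt
    (discAdd_lt_discAdd (norm_nonneg _) (norm_nonneg _) hw.le hz hσr htr)

lemma ball_subset_image_phi_ball (hw : ‖w‖ < σ) (hσr : σ < r) (htr : t ≤ r) :
    Metric.ball 0 t ⊆ phi w r '' Metric.ball 0 (discAdd r σ t) := fun z hz =>
  ⟨phi w r z, image_phi_ball_subset hw hσr htr ⟨z, hz, rfl⟩,
    phi_phi (hw.trans hσr) ((mem_ball_zero_iff.1 hz).trans_le htr)⟩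

end ball

lemma setLIntegral_abs_deriv_mul_comp_le {s t : Set ℝ} {f f' : ℝ → ℝ} (hs : MeasurableSet s)
    (hf' : ∀ x ∈ s, HasDerivWithinAt f (f' x) s x) (hf : InjOn f s) (hst : MapsTo f s t)
    (g : ℝ → ℝ≥0∞) :
    ∫⁻ x in s, ENNReal.ofReal |f' x| * g (f x) ≤ ∫⁻ y in t, g y := by
  rw [← lintegral_image_eq_lintegral_abs_deriv_mul hs hf' hf g]
  exact lintegral_mono_set hst.image_subset

/-- The logarithmic derivative of `u ↦ r²(u − σ)/(r² − σu)`, the inverse of `discAdd r σ`. -/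
noncomputable def discAddJacobian (r σ u : ℝ) : ℝ := (r ^ 2 - σ ^ 2) / ((u - σ) * (r ^ 2 - σ * u))

section jacobian

variable {σ s r : ℝ}

lemma deriv_discAdd_mul_discAddJacobian {t : ℝ} (hσ : 0 ≤ σ) (hσr : σ < r) (ht : 0 < t) :
    r ^ 2 * (r ^ 2 - σ ^ 2) / (r ^ 2 + σ * t) ^ 2 *
      discAddJacobian r σ (discAdd r σ t) = 1 / t := by
  have hr : 0 < r := by linarith
  have hden : r ^ 2 + σ * t ≠ 0 := by positivity
  have hrσ : r ^ 2 - σ ^ 2 ≠ 0 := by nlinarith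
  have hsub : discAdd r σ t - σ = t * (r ^ 2 - σ ^ 2) / (r ^ 2 + σ * t) := by
    unfold discAdd; field_simp; ring
  have hsub' : r ^ 2 - σ * discAdd r σ t = r ^ 2 * (r ^ 2 - σ ^ 2) / (r ^ 2 + σ * t) := by
    unfold discAdd; field_simp; ring
  rw [discAddJacobian, hsub, hsub']
  field_simp

lemma discAddJacobian_le {u : ℝ} (hσ : 0 < σ) (hσs : σ < s) (hu : u ∈ Ioo s r) :
    discAddJacobian r σ u ≤ (s + σ) / (s - σ) / u := by
  obtain ⟨hsu, hur⟩ := hu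
  have hu0 : 0 < u := by linarith
  have hr : 0 < r := by linarith
  have hD : 0 < (u - σ) * (r ^ 2 - σ * u) := mul_pos (by linarith) (by nlinarith)
  have h1 : u * (s - σ) ≤ s * (u - σ) := by nlinarith
  have h2 : r * (r ^ 2 - σ ^ 2) ≤ (r + σ) * (r ^ 2 - σ * u) := by
    nlinarith [mul_nonneg (mul_nonneg hσ.le (sub_nonneg.2 hur.le)) (by linarith : 0 ≤ r + σ)]
  have h12 := mul_le_mul h1 h2 (mul_nonneg hr.le (by nlinarith)) (by nlinarith)
  have h3 : s * (r + σ) ≤ r * (s + σ) := by nlinarith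
  rw [discAddJacobian, div_div, div_le_div_iff₀ hD (by nlinarith)]
  refine le_of_mul_le_mul_left ?_ hr
  nlinarith [mul_le_mul_of_nonneg_right h3 hD.le]

end jacobian

lemma setLIntegral_div_le_of_le_comp_discAdd {σ s r : ℝ} (hσ : 0 < σ) (hσs : σ < s)
    (hsr : s < r) {F G : ℝ → ℝ≥0∞} (hFG : ∀ t ∈ Ioo s r, F t ≤ G (discAdd r σ t)) :
    ∫⁻ t in Ioo s r, F t / ENNReal.ofReal t ≤
      ENNReal.ofReal ((s + σ) / (s - σ)) * ∫⁻ t in Ioo s r, G t / ENNReal.ofReal t := by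
  have hσr : σ < r := hσs.trans hsr
  set A' : ℝ → ℝ := fun t => r ^ 2 * (r ^ 2 - σ ^ 2) / (r ^ 2 + σ * t) ^ 2
  have hA' : ∀ t ∈ Ioo s r, HasDerivWithinAt (discAdd r σ) (A' t) (Ioo s r) t := fun t ht =>
    (hasDerivAt_discAdd (by nlinarith [ht.1])).hasDerivWithinAt
  have hmono : StrictMonoOn (discAdd r σ) (Ioo s r) := fun a ha b hb hab =>
    discAdd_lt_discAdd hσ.le (by linarith [ha.1]) le_rfl hab hσr hb.2.le
  have hmaps : MapsTo (discAdd r σ) (Ioo s r) (Ioo s r) := fun t ht =>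
    discAdd_mem_Ioo hσ.le hσr (by linarith) ht
  calc ∫⁻ t in Ioo s r, F t / ENNReal.ofReal t
      ≤ ∫⁻ t in Ioo s r, ENNReal.ofReal |A' t| * (G (discAdd r σ t) *
          ENNReal.ofReal (discAddJacobian r σ (discAdd r σ t))) := by
        refine setLIntegral_mono' measurableSet_Ioo fun t ht => ?_
        have ht0 : 0 < t := by linarith [ht.1]
        have hA'0 : 0 ≤ A' t := div_nonneg (mul_nonneg (sq_nonneg r) (by nlinarith)) (sq_nonneg _)
        rw [abs_of_nonneg hA'0, mul_left_comm, ← ENNReal.ofReal_mul hA'0,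
          deriv_discAdd_mul_discAddJacobian hσ.le hσr ht0, one_div, ENNReal.ofReal_inv_of_pos ht0,
          ← div_eq_mul_inv]
        exact ENNReal.div_le_div_right (hFG t ht) _
    _ ≤ ∫⁻ u in Ioo s r, G u * ENNReal.ofReal (discAddJacobian r σ u) :=
        setLIntegral_abs_deriv_mul_comp_le measurableSet_Ioo hA' hmono.injOn hmaps _
    _ ≤ ∫⁻ u in Ioo s r, ENNReal.ofReal ((s + σ) / (s - σ)) * (G u / ENNReal.ofReal u) := by
        refine setLIntegral_mono' measurableSet_Ioo fun u hu => ?_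
        have hu0 : 0 < u := by linarith [hu.1]
        calc G u * ENNReal.ofReal (discAddJacobian r σ u)
            ≤ G u * ENNReal.ofReal ((s + σ) / (s - σ) / u) := by
              gcongr; exact discAddJacobian_le hσ hσs hu
          _ = ENNReal.ofReal ((s + σ) / (s - σ)) * (G u / ENNReal.ofReal u) := by
              rw [ENNReal.ofReal_div_of_pos hu0, ← mul_div_assoc, ← mul_div_assoc, mul_comm]
    _ = ENNReal.ofReal ((s + σ) / (s - σ)) * ∫⁻ t in Ioo s r, G t / ENNReal.ofReal t :=
        lintegral_const_mul' _ _ ENNReal.ofReal_ne_top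

/-- Comparison of `T_s(r,μ) = ∫_s^r μ(𝔻(t)) dt/t` with
`T_s^w(r,μ) = ∫_s^r μ(φ_{w,r}(𝔻(t))) dt/t` for `w ∈ 𝔻(σ)`, `0 < σ < s < r < 1`. -/
theorem stmt7 (σ s r : ℝ) (hσ0 : 0 < σ) (hσs : σ < s) (hsr : s < r) (hr1 : r < 1)
    (μ : Measure ℂ) (w : ℂ) (hw : ‖w‖ < σ) :
    ENNReal.ofReal (s * (s - σ) / (s + σ)) *
        (∫⁻ t in Set.Ioo s r, μ (phi w r '' Metric.ball 0 t) / ENNReal.ofReal t) ≤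
      (∫⁻ t in Set.Ioo s r, μ (Metric.ball 0 t) / ENNReal.ofReal t) ∧
    (∫⁻ t in Set.Ioo s r, μ (Metric.ball 0 t) / ENNReal.ofReal t) ≤
      ENNReal.ofReal ((s + σ) / (s * (s - σ))) *
        ∫⁻ t in Set.Ioo s r, μ (phi w r '' Metric.ball 0 t) / ENNReal.ofReal t := by
  have hσr : σ < r := hσs.trans hsr
  have hC0 : 0 < (s + σ) / (s * (s - σ)) :=
    div_pos (by linarith) (mul_pos (by linarith) (by linarith))
  have hC : ENNReal.ofReal ((s + σ) / (s - σ)) ≤ ENNReal.ofReal ((s + σ) / (s * (s - σ))) := by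
    refine ENNReal.ofReal_le_ofReal (div_le_div_of_nonneg_left (by linarith) ?_ ?_) <;>
      nlinarith
  set T : ℝ → ℝ≥0∞ := fun t => μ (Metric.ball 0 t)
  set Tw : ℝ → ℝ≥0∞ := fun t => μ (phi w r '' Metric.ball 0 t)
  have hT := setLIntegral_div_le_of_le_comp_discAdd (F := T) (G := Tw) hσ0 hσs hsr fun t ht =>
    measure_mono (ball_subset_image_phi_ball hw hσr ht.2.le)
  have hTw := setLIntegral_div_le_of_le_comp_discAdd (F := Tw) (G := T) hσ0 hσs hsr fun t ht =>
    measure_mono (image_phi_ball_subset hw hσr ht.2.le)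
  refine ⟨?_, hT.trans (by gcongr)⟩
  rw [← inv_div, ENNReal.ofReal_inv_of_pos hC0,
    ENNReal.inv_mul_le_iff (ENNReal.ofReal_pos.2 hC0).ne' ENNReal.ofReal_ne_top]
  exact hTw.trans (by gcongr)
end

section
/- Let K ⊆ ℂ be a compact set and suppose K is covered by finitely many closed discs D₁,…,Dₙ of radii r₁,…,rₙ > 0. Then there exist finitely many pairwise disjoint closed discs D′₁,…,D′ₘ of positive radii r′₁,…,r′ₘ such that K ⊆ D′₁ ∪ ⋯ ∪ D′ₘ and r′₁ + ⋯ + r′ₘ ≤ r₁ + ⋯ + rₙ. -/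
/-!
Two intersecting closed discs of radii `r₁, r₂` both lie in the closed disc of radius
`r₁ + r₂` centred at the point dividing the segment between their centres in the ratio
`r₂ : r₁`. Replacing an intersecting pair by this disc decreases the number of discs, keeps
the total radius and enlarges the union, so after finitely many merges the discs are pairwise
disjoint.
-/

open Function Metric AffineMap

section Merge

variable {E : Type*} [SeminormedAddCommGroup E] [NormedSpace ℝ E]

lemma closedBall_union_subset_closedBall_lineMap {x y : E} {r₁ r₂ : ℝ}
    (h : ¬Disjoint (closedBall x r₁) (closedBall y r₂)) :
    closedBall x r₁ ∪ closedBall y r₂ ⊆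
      closedBall (lineMap x y (r₂ / (r₁ + r₂))) (r₁ + r₂) := by
  obtain ⟨z, hzx, hzy⟩ := Set.not_disjoint_iff.mp h
  have h₁ : 0 ≤ r₁ := nonempty_closedBall.mp ⟨z, hzx⟩
  have h₂ : 0 ≤ r₂ := nonempty_closedBall.mp ⟨z, hzy⟩
  have hxy : dist x y ≤ r₁ + r₂ := not_lt.mp fun hlt => h (closedBall_disjoint_closedBall hlt)
  set t := r₂ / (r₁ + r₂)
  -- when `r₁ + r₂ = 0` both radii vanish, so the junk value `t = 0` is harmless
  have ht : t * (r₁ + r₂) = r₂ := div_mul_cancel_of_imp fun h0 => by linarith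
  have ht₀ : 0 ≤ t := by positivity
  have ht₁ : t ≤ 1 := div_le_one_of_le₀ (by linarith) (by linarith)
  have hx : dist x (lineMap x y t) ≤ r₂ := by
    rw [dist_left_lineMap, Real.norm_of_nonneg ht₀, ← ht]
    exact mul_le_mul_of_nonneg_left hxy ht₀
  have hy : dist y (lineMap x y t) ≤ r₁ := by
    rw [dist_right_lineMap, Real.norm_of_nonneg (sub_nonneg.mpr ht₁)]
    calc (1 - t) * dist x y ≤ (1 - t) * (r₁ + r₂) :=
          mul_le_mul_of_nonneg_left hxy (sub_nonneg.mpr ht₁)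
      _ = r₁ := by linarith
  exact Set.union_subset (closedBall_subset_closedBall' (by linarith))
    (closedBall_subset_closedBall' (by linarith))

lemma exists_merge_closedBalls {m : ℕ} (c : Fin (m + 1) → E) (r : Fin (m + 1) → ℝ)
    (hr : ∀ k, 0 < r k) {i j : Fin (m + 1)} (hij : i ≠ j)
    (h : ¬Disjoint (closedBall (c i) (r i)) (closedBall (c j) (r j))) :
    ∃ (c' : Fin m → E) (r' : Fin m → ℝ), (∀ k, 0 < r' k) ∧
      (⋃ k, closedBall (c k) (r k)) ⊆ (⋃ k, closedBall (c' k) (r' k)) ∧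
      ∑ k, r' k = ∑ k, r k := by
  obtain ⟨i, rfl⟩ := Fin.exists_succAbove_eq hij
  have hmerge := closedBall_union_subset_closedBall_lineMap h
  refine ⟨update (c ∘ j.succAbove) i
      (lineMap (c (j.succAbove i)) (c j) (r j / (r (j.succAbove i) + r j))),
    update (r ∘ j.succAbove) i (r (j.succAbove i) + r j), ?_, ?_, ?_⟩
  · intro k
    rcases eq_or_ne k i with rfl | hk
    · simpa using add_pos (hr _) (hr j)
    · simpa [update_of_ne hk] using hr _
  · refine Set.iUnion_subset (j.forall_iff_succAbove.mpr ⟨?_, fun k => ?_⟩)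
    · exact (Set.subset_union_right.trans hmerge).trans (Set.subset_iUnion_of_subset i (by simp))
    rcases eq_or_ne k i with rfl | hk
    · exact (Set.subset_union_left.trans hmerge).trans (Set.subset_iUnion_of_subset k (by simp))
    · exact Set.subset_iUnion_of_subset k (by simp [update_of_ne hk])
  · rw [Finset.sum_update_of_mem (Finset.mem_univ i), Fin.sum_univ_succAbove r j,
      Finset.sum_eq_add_sum_sdiff_singleton_of_mem (Finset.mem_univ i)]
    simp only [comp_apply]
    ring

theorem exists_pairwise_disjoint_closedBalls_cover (n : ℕ) (c : Fin n → E) (r : Fin n → ℝ)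
    (hr : ∀ i, 0 < r i) :
    ∃ (m : ℕ) (c' : Fin m → E) (r' : Fin m → ℝ), (∀ j, 0 < r' j) ∧
      Pairwise (Disjoint on fun j => closedBall (c' j) (r' j)) ∧
      (⋃ i, closedBall (c i) (r i)) ⊆ (⋃ j, closedBall (c' j) (r' j)) ∧
      ∑ j, r' j ≤ ∑ i, r i := by
  induction n with
  | zero => exact ⟨0, c, r, hr, fun j => j.elim0, subset_rfl, le_rfl⟩
  | succ m ih =>
    by_cases hdisj : Pairwise (Disjoint on fun i => closedBall (c i) (r i))
    · exact ⟨m + 1, c, r, hr, hdisj, subset_rfl, le_rfl⟩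
    obtain ⟨i, j, hij, hij'⟩ : ∃ i j, i ≠ j ∧
        ¬Disjoint (closedBall (c i) (r i)) (closedBall (c j) (r j)) := by
      simpa [Pairwise] using hdisj
    obtain ⟨c₁, r₁, hr₁, hcover₁, hsum₁⟩ := exists_merge_closedBalls c r hr hij hij'
    obtain ⟨k, c', r', hr', hdisj', hcover', hsum'⟩ := ih c₁ r₁ hr₁
    exact ⟨k, c', r', hr', hdisj', hcover₁.trans hcover', hsum'.trans hsum₁.le⟩

end Merge

theorem stmt9_general (K : Set ℂ) (n : ℕ) (c : Fin n → ℂ) (r : Fin n → ℝ)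
    (hr : ∀ i, 0 < r i) (hcover : K ⊆ ⋃ i, Metric.closedBall (c i) (r i)) :
    ∃ (m : ℕ) (c' : Fin m → ℂ) (r' : Fin m → ℝ),
      (∀ j, 0 < r' j) ∧
      (∀ j j', j ≠ j' →
        Disjoint (Metric.closedBall (c' j) (r' j)) (Metric.closedBall (c' j') (r' j'))) ∧
      K ⊆ ⋃ j, Metric.closedBall (c' j) (r' j) ∧
      ∑ j, r' j ≤ ∑ i, r i := by
  obtain ⟨m, c', r', hr', hdisj, hcover', hsum⟩ :=
    exists_pairwise_disjoint_closedBalls_cover n c r hr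
  exact ⟨m, c', r', hr', hdisj, hcover.trans hcover', hsum⟩

/-- A compact set covered by finitely many closed discs is covered by finitely many
pairwise disjoint closed discs with no larger total radius. -/
theorem stmt9 (K : Set ℂ) (hK : IsCompact K) (n : ℕ) (c : Fin n → ℂ) (r : Fin n → ℝ)
    (hr : ∀ i, 0 < r i) (hcover : K ⊆ ⋃ i, Metric.closedBall (c i) (r i)) :
    ∃ (m : ℕ) (c' : Fin m → ℂ) (r' : Fin m → ℝ),
      (∀ j, 0 < r' j) ∧
      (∀ j j', j ≠ j' →
        Disjoint (Metric.closedBall (c' j) (r' j)) (Metric.closedBall (c' j') (r' j'))) ∧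
      K ⊆ ⋃ j, Metric.closedBall (c' j) (r' j) ∧
      ∑ j, r' j ≤ ∑ i, r i :=
  stmt9_general K n c r hr hcover
end

section
/- Let S be a metric space and let (f_i)_{i∈I} be an infinite indexed family of continuous maps 𝔻 → S. Let Z₁ and Z₂ be closed subsets of S. If (f_i)_{i∈I} → Z₁ and (f_i)_{i∈I} → Z₂, then (f_i)_{i∈I} → Z₁ ∩ Z₂. -/
open scoped ENNReal NNReal

/-- `P` holds for `γ`-almost all points of `W`: the exceptional points are contained in
at most countably many closed discs the sum of whose radii is less than `γ`. -/
def GammaAlmostAll (γ : ℝ) (W : Set ℂ) (P : ℂ → Prop) : Prop :=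
  ∃ (c : ℕ → ℂ) (ρ : ℕ → ℝ≥0),
    (∑' n, (ρ n : ℝ≥0∞)) < ENNReal.ofReal γ ∧
    ∀ z ∈ W, ¬P z → ∃ n, z ∈ Metric.closedBall (c n) (ρ n)

/-- `(F i)_{i ∈ ι} → Z`: for all `0 < s < 1`, `γ > 0` and every open neighbourhood `U` of
`Z`, all but finitely many members of the family map `γ`-almost all of `𝔻(s)` into `U`. -/
def TendstoClosed {ι S : Type*} [MetricSpace S] (F : ι → ℂ → S) (Z : Set S) : Prop :=
  ∀ s : ℝ, 0 < s → s < 1 → ∀ γ : ℝ, 0 < γ → ∀ U : Set S, IsOpen U → Z ⊆ U →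
    ∃ E : Set ι, E.Finite ∧ ∀ i, i ∉ E →
      GammaAlmostAll γ (Metric.ball 0 s) (fun z => F i z ∈ U)

/-! Given an open `U ⊇ Z₁ ∩ Z₂`, normality of `S` separates `Z₁ \ U` and `Z₂ \ U` by disjoint
open sets `V₁, V₂`; then `U ∪ V₁ ⊇ Z₁` and `U ∪ V₂ ⊇ Z₂` meet inside `U`. Beyond finitely many
indices, each of them contains the image of `(γ/2)`-almost all of `𝔻(s)`, and the two countable
families of exceptional discs together have total radius less than `γ`. -/

theorem exists_isOpen_superset_inter_subset {X : Type*} [TopologicalSpace X] [NormalSpace X]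
    {s t u : Set X} (hs : IsClosed s) (ht : IsClosed t) (hu : IsOpen u) (hstu : s ∩ t ⊆ u) :
    ∃ v w : Set X, IsOpen v ∧ IsOpen w ∧ s ⊆ v ∧ t ⊆ w ∧ v ∩ w ⊆ u := by
  have hdisj : Disjoint (s \ u) (t \ u) :=
    Set.disjoint_left.mpr fun x hxs hxt => hxs.2 (hstu ⟨hxs.1, hxt.1⟩)
  obtain ⟨v, w, hv, hw, hsv, htw, hvw⟩ := normal_separation (hs.sdiff hu) (ht.sdiff hu) hdisj
  refine ⟨u ∪ v, u ∪ w, hu.union hv, hu.union hw, ?_, ?_, ?_⟩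
  · exact fun x hx => (em (x ∈ u)).imp id fun hxu => hsv ⟨hx, hxu⟩
  · exact fun x hx => (em (x ∈ u)).imp id fun hxu => htw ⟨hx, hxu⟩
  · rw [← Set.union_inter_distrib_left, hvw.inter_eq, Set.union_empty]

namespace GammaAlmostAll

variable {γ γ₁ γ₂ : ℝ} {W : Set ℂ} {P Q : ℂ → Prop}

theorem mono (h : GammaAlmostAll γ W P) (hPQ : ∀ z, P z → Q z) : GammaAlmostAll γ W Q :=
  let ⟨c, ρ, hρ, hcover⟩ := h
  ⟨c, ρ, hρ, fun z hz hQ => hcover z hz (mt (hPQ z) hQ)⟩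

theorem nonneg (h : GammaAlmostAll γ W P) : 0 ≤ γ :=
  let ⟨_, _, hρ, _⟩ := h
  (ENNReal.ofReal_pos.mp (pos_of_gt hρ)).le

theorem and (h₁ : GammaAlmostAll γ₁ W P) (h₂ : GammaAlmostAll γ₂ W Q) :
    GammaAlmostAll (γ₁ + γ₂) W (fun z => P z ∧ Q z) := by
  have hγ := ENNReal.ofReal_add h₁.nonneg h₂.nonneg
  obtain ⟨c₁, ρ₁, hρ₁, hcover₁⟩ := h₁
  obtain ⟨c₂, ρ₂, hρ₂, hcover₂⟩ := h₂
  set e := Equiv.natSumNatEquivNat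
  refine ⟨Sum.elim c₁ c₂ ∘ e.symm, Sum.elim ρ₁ ρ₂ ∘ e.symm, ?_, ?_⟩
  · calc ∑' n, ((Sum.elim ρ₁ ρ₂ (e.symm n) : ℝ≥0) : ℝ≥0∞)
        = ∑' k, ((Sum.elim ρ₁ ρ₂ k : ℝ≥0) : ℝ≥0∞) :=
          e.symm.tsum_eq fun k => ((Sum.elim ρ₁ ρ₂ k : ℝ≥0) : ℝ≥0∞)
      _ = (∑' n, (ρ₁ n : ℝ≥0∞)) + ∑' n, (ρ₂ n : ℝ≥0∞) :=
          ENNReal.summable.tsum_sum ENNReal.summable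
      _ < ENNReal.ofReal γ₁ + ENNReal.ofReal γ₂ := ENNReal.add_lt_add hρ₁ hρ₂
      _ = ENNReal.ofReal (γ₁ + γ₂) := hγ.symm
  · intro z hz hPQ
    by_cases hP : P z
    · obtain ⟨n, hn⟩ := hcover₂ z hz fun hQ => hPQ ⟨hP, hQ⟩
      exact ⟨e (.inr n), by simpa using hn⟩
    · obtain ⟨n, hn⟩ := hcover₁ z hz hP
      exact ⟨e (.inl n), by simpa using hn⟩

end GammaAlmostAll

theorem stmt10_general {ι S : Type*} [MetricSpace S]
    (F : ι → ℂ → S)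
    (Z₁ Z₂ : Set S) (hZ₁ : IsClosed Z₁) (hZ₂ : IsClosed Z₂)
    (h₁ : TendstoClosed F Z₁) (h₂ : TendstoClosed F Z₂) :
    TendstoClosed F (Z₁ ∩ Z₂) := by
  intro s hs hs1 γ hγ U hU hZU
  obtain ⟨U₁, U₂, hU₁, hU₂, hZU₁, hZU₂, hU₁₂⟩ :=
    exists_isOpen_superset_inter_subset hZ₁ hZ₂ hU hZU
  obtain ⟨E₁, hE₁, hE₁U⟩ := h₁ s hs hs1 (γ / 2) (half_pos hγ) U₁ hU₁ hZU₁
  obtain ⟨E₂, hE₂, hE₂U⟩ := h₂ s hs hs1 (γ / 2) (half_pos hγ) U₂ hU₂ hZU₂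
  refine ⟨E₁ ∪ E₂, hE₁.union hE₂, fun i hi => ?_⟩
  rw [Set.mem_union, not_or] at hi
  have hboth := (hE₁U i hi.1).and (hE₂U i hi.2)
  rw [add_halves] at hboth
  exact hboth.mono fun z hz => hU₁₂ hz

/-- If an infinite family converges to two closed sets in the sense above, it converges
to their intersection. -/
theorem stmt10 {ι S : Type*} [MetricSpace S] [Infinite ι]
    (F : ι → ℂ → S) (hF : ∀ i, ContinuousOn (F i) (Metric.ball 0 1))
    (Z₁ Z₂ : Set S) (hZ₁ : IsClosed Z₁) (hZ₂ : IsClosed Z₂)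
    (h₁ : TendstoClosed F Z₁) (h₂ : TendstoClosed F Z₂) :
    TendstoClosed F (Z₁ ∩ Z₂) :=
  stmt10_general F Z₁ Z₂ hZ₁ hZ₂ h₁ h₂
end

section
/- Let S and S′ be metric spaces and let φ : S′ → S be a continuous proper map, i.e., the preimage under φ of every compact subset of S is compact. Let Z ⊆ S be a closed set and let (f_i)_{i∈I} be an infinite indexed family of continuous maps 𝔻 → S′ such that (φ ∘ f_i)_{i∈I} → Z. Then (f_i)_{i∈I} → φ⁻¹(Z). -/
open scoped ENNReal NNReal

/-! A proper map is closed, so every open neighbourhood `U` of `φ⁻¹(Z)` contains the preimage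
of an open neighbourhood `V` of `Z` (take `V` to be the complement of `φ(Uᶜ)`). Whenever
`φ (F i z) ∈ V` we then have `F i z ∈ U`, so the exceptional discs for `φ ∘ F i` and `V`
also serve for `F i` and `U`. -/

open Filter Topology

theorem GammaAlmostAll.mono_s11 {γ : ℝ} {W : Set ℂ} {P Q : ℂ → Prop}
    (h : GammaAlmostAll γ W P) (hPQ : ∀ z, P z → Q z) : GammaAlmostAll γ W Q := by
  obtain ⟨c, ρ, hρ, hcover⟩ := h
  exact ⟨c, ρ, hρ, fun z hz hQ => hcover z hz (mt (hPQ z) hQ)⟩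

theorem IsClosedMap.exists_isOpen_preimage_subset {X Y : Type*} [TopologicalSpace X]
    [TopologicalSpace Y] {f : X → Y} (hf : IsClosedMap f) {Z : Set Y} {U : Set X}
    (hU : IsOpen U) (hZU : f ⁻¹' Z ⊆ U) : ∃ V, IsOpen V ∧ Z ⊆ V ∧ f ⁻¹' V ⊆ U := by
  have hU' : U ∈ comap f (𝓝ˢ Z) :=
    isClosedMap_iff_comap_nhdsSet_le.mp hf (hU.mem_nhdsSet.mpr hZU)
  obtain ⟨t, ht, htU⟩ := mem_comap.mp hU'
  obtain ⟨V, hV, hZV, hVt⟩ := mem_nhdsSet_iff_exists.mp ht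
  exact ⟨V, hV, hZV, (Set.preimage_mono hVt).trans htU⟩

theorem TendstoClosed.of_comp_isClosedMap {ι S' S : Type*} [MetricSpace S'] [MetricSpace S]
    {φ : S' → S} (hφ : IsClosedMap φ) {Z : Set S} {F : ι → ℂ → S'}
    (h : TendstoClosed (fun i => φ ∘ F i) Z) : TendstoClosed F (φ ⁻¹' Z) := by
  intro s hs hs1 γ hγ U hU hZU
  obtain ⟨V, hV, hZV, hVU⟩ := hφ.exists_isOpen_preimage_subset hU hZU
  obtain ⟨E, hE, hEi⟩ := h s hs hs1 γ hγ V hV hZV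
  exact ⟨E, hE, fun i hi => (hEi i hi).mono_s11 fun z hz => hVU hz⟩

theorem stmt11_general {ι S' S : Type*} [MetricSpace S'] [MetricSpace S]
    (φ : S' → S) (hφc : Continuous φ)
    (hφp : ∀ K : Set S, IsCompact K → IsCompact (φ ⁻¹' K))
    (Z : Set S)
    (F : ι → ℂ → S')
    (h : TendstoClosed (fun i => φ ∘ F i) Z) :
    TendstoClosed F (φ ⁻¹' Z) :=
  have hproper : IsProperMap φ := isProperMap_iff_isCompact_preimage.mpr ⟨hφc, hφp⟩
  h.of_comp_isClosedMap hproper.isClosedMap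

/-- If `φ` is continuous and proper and `(φ ∘ F i)_{i} → Z`, then `(F i)_i → φ⁻¹(Z)`. -/
theorem stmt11 {ι S' S : Type*} [MetricSpace S'] [MetricSpace S] [Infinite ι]
    (φ : S' → S) (hφc : Continuous φ)
    (hφp : ∀ K : Set S, IsCompact K → IsCompact (φ ⁻¹' K))
    (Z : Set S) (hZ : IsClosed Z)
    (F : ι → ℂ → S') (hF : ∀ i, ContinuousOn (F i) (Metric.ball 0 1))
    (h : TendstoClosed (fun i => φ ∘ F i) Z) :
    TendstoClosed F (φ ⁻¹' Z) :=
  stmt11_general φ hφc hφp Z F h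
end

section
/- Let S be a metric space, let Z ⊆ S be a closed set, and let 𝓕 be an infinite set of continuous maps 𝔻 → S such that the relation 𝓕 → Z fails. Then there exists an infinite subset 𝓖 ⊆ 𝓕 such that f(𝔻) ⊄ Z for every f ∈ 𝓖, and for every infinite subset 𝓖′ ⊆ 𝓖 the relation 𝓖′ → Z fails. -/
/-!
A witness `(s, γ, U)` to the failure of `𝓕 → Z` fails for infinitely many members of `𝓕`;
take `𝓖` to be the set of those members. The same witness then refutes `𝓖' → Z` for every
infinite `𝓖' ⊆ 𝓖`, and no member of `𝓖` maps `𝔻` into `Z ⊆ U`, since otherwise `f z ∈ U`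
would hold on all of `𝔻(s)`, with no exceptional disc at all.
-/

open scoped ENNReal NNReal

/-- `𝓕 → Z` for a set `𝓕` of maps, regarded as a family indexed by itself. -/
def TendstoClosedSet {S : Type*} [MetricSpace S] (𝓕 : Set (ℂ → S)) (Z : Set S) : Prop :=
  ∀ s : ℝ, 0 < s → s < 1 → ∀ γ : ℝ, 0 < γ → ∀ U : Set S, IsOpen U → Z ⊆ U →
    ∃ E : Set (ℂ → S), E.Finite ∧ ∀ f ∈ 𝓕, f ∉ E →
      GammaAlmostAll γ (Metric.ball 0 s) (fun z => f z ∈ U)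

open Metric

theorem gammaAlmostAll_of_forall {γ : ℝ} (hγ : 0 < γ) {W : Set ℂ} {P : ℂ → Prop}
    (h : ∀ z ∈ W, P z) : GammaAlmostAll γ W P :=
  ⟨fun _ => 0, fun _ => 0, by simpa using hγ, fun z hz hPz => absurd (h z hz) hPz⟩

theorem image_ball_not_subset_of_not_gammaAlmostAll {S : Type*} {Z U : Set S} {f : ℂ → S}
    {s γ : ℝ} (hs1 : s ≤ 1) (hγ : 0 < γ) (hZU : Z ⊆ U)
    (hbad : ¬GammaAlmostAll γ (ball 0 s) (fun z => f z ∈ U)) :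
    ¬f '' ball 0 1 ⊆ Z := fun hsub =>
  hbad <| gammaAlmostAll_of_forall hγ fun _ hz =>
    hZU <| hsub <| Set.mem_image_of_mem f <| ball_subset_ball hs1 hz

section TendstoClosedSet

variable {S : Type*} [MetricSpace S] {Z : Set S}

theorem exists_infinite_not_gammaAlmostAll_of_not_tendstoClosedSet {𝓕 : Set (ℂ → S)}
    (h : ¬TendstoClosedSet 𝓕 Z) :
    ∃ s γ : ℝ, ∃ U : Set S, 0 < s ∧ s < 1 ∧ 0 < γ ∧ IsOpen U ∧ Z ⊆ U ∧
      {f ∈ 𝓕 | ¬GammaAlmostAll γ (ball 0 s) (fun z => f z ∈ U)}.Infinite := by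
  simp only [TendstoClosedSet] at h
  push Not at h
  obtain ⟨s, hs0, hs1, γ, hγ, U, hU, hZU, hE⟩ := h
  refine ⟨s, γ, U, hs0, hs1, hγ, hU, hZU, fun hfin => ?_⟩
  obtain ⟨f, hf𝓕, hf_bad, hf_ae⟩ := hE _ hfin
  exact hf_bad ⟨hf𝓕, hf_ae⟩

theorem not_tendstoClosedSet_of_forall_not_gammaAlmostAll {𝓖 : Set (ℂ → S)} {s γ : ℝ}
    {U : Set S} (hs0 : 0 < s) (hs1 : s < 1) (hγ : 0 < γ) (hU : IsOpen U) (hZU : Z ⊆ U)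
    (hinf : 𝓖.Infinite) (hbad : ∀ f ∈ 𝓖, ¬GammaAlmostAll γ (ball 0 s) (fun z => f z ∈ U)) :
    ¬TendstoClosedSet 𝓖 Z := fun h => by
  obtain ⟨E, hEfin, hall⟩ := h s hs0 hs1 γ hγ U hU hZU
  obtain ⟨f, hf𝓖, hfE⟩ := (hinf.sdiff hEfin).nonempty
  exact hbad f hf𝓖 (hall f hf𝓖 hfE)

end TendstoClosedSet

theorem stmt12_general {S : Type*} [MetricSpace S] (Z : Set S)
    (𝓕 : Set (ℂ → S))
    (hne : ¬TendstoClosedSet 𝓕 Z) :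
    ∃ 𝓖 ⊆ 𝓕, 𝓖.Infinite ∧
      (∀ f ∈ 𝓖, ¬(f '' Metric.ball 0 1 ⊆ Z)) ∧
      ∀ 𝓖' ⊆ 𝓖, 𝓖'.Infinite → ¬TendstoClosedSet 𝓖' Z := by
  obtain ⟨s, γ, U, hs0, hs1, hγ, hU, hZU, hinf⟩ :=
    exists_infinite_not_gammaAlmostAll_of_not_tendstoClosedSet hne
  refine ⟨_, Set.sep_subset _ _, hinf, fun f hf => ?_, fun 𝓖' hsub h𝓖' => ?_⟩
  · exact image_ball_not_subset_of_not_gammaAlmostAll hs1.le hγ hZU hf.2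
  · exact not_tendstoClosedSet_of_forall_not_gammaAlmostAll hs0 hs1 hγ hU hZU h𝓖'
      fun f hf => (hsub hf).2

/-- If `𝓕 → Z` fails, one can pass to an infinite subset `𝓖 ⊆ 𝓕` none of whose members
maps `𝔻` into `Z`, and such that `𝓖' → Z` fails for every infinite `𝓖' ⊆ 𝓖`. -/
theorem stmt12 {S : Type*} [MetricSpace S] (Z : Set S) (hZ : IsClosed Z)
    (𝓕 : Set (ℂ → S)) (hinf : 𝓕.Infinite)
    (hcont : ∀ f ∈ 𝓕, ContinuousOn f (Metric.ball 0 1))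
    (hne : ¬TendstoClosedSet 𝓕 Z) :
    ∃ 𝓖 ⊆ 𝓕, 𝓖.Infinite ∧
      (∀ f ∈ 𝓖, ¬(f '' Metric.ball 0 1 ⊆ Z)) ∧
      ∀ 𝓖' ⊆ 𝓖, 𝓖'.Infinite → ¬TendstoClosedSet 𝓖' Z :=
  stmt12_general Z 𝓕 hne
end

section
/- Let R be a commutative ℂ-algebra, let S be an integral domain which is a finitely generated ℂ-algebra, and let I ⊆ R be an ideal. Let f₁,…,f_l ∈ R and g₁,…,g_l ∈ S, and assume that for every ℂ-algebra homomorphism ε : S → ℂ the element ε(g₁)·f₁ + ⋯ + ε(g_l)·f_l lies in I. Then the elementف f₁ ⊗ g₁ + ⋯ + f_l ⊗ g_l of R ⊗_ℂ S lies in the image of the canonical map I ⊗_ℂ S → R ⊗_ℂ S. -/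
/-!
Choosing a basis of the ℂ-vector space `R ⧸ I` identifies `(R ⧸ I) ⊗ S` with finitely supported
families in `S`, and the image of `∑ fᵢ ⊗ gᵢ` there has coordinates whose values at every ℂ-point
`ε` of `S` are the coordinates of `∑ ε(gᵢ) fᵢ ≡ 0 (mod I)`. By the Nullstellensatz a function on
the reduced finite type algebra `S` vanishing at all ℂ-points is zero, so `∑ fᵢ ⊗ gᵢ` maps to zero
in `(R ⧸ I) ⊗ S`; right exactness of `⊗ S` then puts it in the image of `I ⊗ S`.
-/

open scoped TensorProduct

theorem exists_algHom_ker_eq_of_isMaximal {k S : Type*} [Field k] [IsAlgClosed k] [CommRing S]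
    [Algebra k S] [Algebra.FiniteType k S] (m : Ideal S) [m.IsMaximal] :
    ∃ ε : S →ₐ[k] k, RingHom.ker ε = m := by
  let _ := Ideal.Quotient.field m
  have : Module.Finite k (S ⧸ m) := finite_of_finite_type_of_isJacobsonRing k (S ⧸ m)
  let e : k ≃ₐ[k] S ⧸ m := AlgEquiv.ofBijective (Algebra.ofId k (S ⧸ m))
    IsAlgClosed.algebraMap_bijective_of_isIntegral
  refine ⟨(e.symm : S ⧸ m →ₐ[k] k).comp (Ideal.Quotient.mkₐ k m), ?_⟩
  ext s
  simp [Ideal.Quotient.eq_zero_iff_mem]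

theorem eq_zero_of_forall_algHom_apply_eq_zero {k S : Type*} [Field k] [IsAlgClosed k]
    [CommRing S] [IsReduced S] [Algebra k S] [Algebra.FiniteType k S] {s : S}
    (hs : ∀ ε : S →ₐ[k] k, ε s = 0) : s = 0 := by
  have : IsJacobsonRing S := isJacobsonRing_of_finiteType (A := k)
  rw [← Ideal.mem_bot, ← IsJacobsonRing.out' ⊥ Ideal.isRadical_bot, Ideal.jacobson,
    Ideal.mem_sInf]
  rintro m ⟨-, hm⟩
  obtain ⟨ε, hε⟩ := exists_algHom_ker_eq_of_isMaximal (k := k) m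
  exact hε ▸ hs ε

theorem TensorProduct.eq_zero_of_forall_rid_lTensor_algHom_eq_zero {k S M : Type*} [CommRing k]
    [CommRing S] [Algebra k S] [AddCommGroup M] [Module k M] [Module.Free k M]
    (hS : ∀ s : S, (∀ ε : S →ₐ[k] k, ε s = 0) → s = 0) {x : M ⊗[k] S}
    (hx : ∀ ε : S →ₐ[k] k, TensorProduct.rid k M (ε.toLinearMap.lTensor M x) = 0) : x = 0 := by
  classical
  let b := Module.Free.chooseBasis k M
  have coord_rid_lTensor (ε : S →ₐ[k] k) (i) (x : M ⊗[k] S) :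
      b.coord i (TensorProduct.rid k M (ε.toLinearMap.lTensor M x)) =
        ε (TensorProduct.equivFinsuppOfBasisLeft b x i) := by
    rw [TensorProduct.equivFinsuppOfBasisLeft_apply]
    induction x using TensorProduct.induction_on with
    | zero => simp
    | tmul m s => simp [mul_comm]
    | add x y hx hy => simp_all
  refine (TensorProduct.equivFinsuppOfBasisLeft b).map_eq_zero_iff.1
    (Finsupp.ext fun i ↦ hS _ fun ε ↦ ?_)
  rw [← coord_rid_lTensor, hx, map_zero]

/-- If `∑ ε(gᵢ)·fᵢ ∈ I` for every ℂ-point `ε` of the finitely generated integral domain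
`S`, then `∑ fᵢ ⊗ gᵢ` lies in the image of `I ⊗_ℂ S → R ⊗_ℂ S`. -/
theorem stmt13 (R S : Type*) [CommRing R] [Algebra ℂ R]
    [CommRing S] [IsDomain S] [Algebra ℂ S] (hS : Algebra.FiniteType ℂ S)
    (I : Ideal R) (l : ℕ) (f : Fin l → R) (g : Fin l → S)
    (h : ∀ ε : S →ₐ[ℂ] ℂ, ∑ i, ε (g i) • f i ∈ I) :
    (∑ i, f i ⊗ₜ[ℂ] g i) ∈
      LinearMap.range (TensorProduct.map (I.restrictScalars ℂ).subtype
        (LinearMap.id : S →ₗ[ℂ] S)) := by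
  have := hS
  rw [← LinearMap.rTensor, ← rTensor_mkQ, LinearMap.mem_ker]
  refine TensorProduct.eq_zero_of_forall_rid_lTensor_algHom_eq_zero
    (fun _ ↦ eq_zero_of_forall_algHom_apply_eq_zero) fun ε ↦ ?_
  have hzero : (I.restrictScalars ℂ).mkQ (∑ i, ε (g i) • f i) = 0 :=
    (Submodule.Quotient.mk_eq_zero _).2 (h ε)
  simpa only [map_sum, map_smul, LinearMap.rTensor_tmul, LinearMap.lTensor_tmul,
    AlgHom.toLinearMap_apply, TensorProduct.rid_tmul] using hzero
end

section
/- Let E and F be finite-dimensional real inner product spaces, let ψ : E → F be a surjective linear map, and let ψ* : F → E denote its adjoint. Let C ⊆ F be a subset with 0 ∈ C (for example, a convex cone containing the origin). Then { u ∈ E : ⟨x, u⟩ ≥ 0 for all x ∈ ψ⁻¹(C) } = ψ*( { v ∈ F : ⟨y, v⟩ ≥ 0 for all y ∈ C } ); that is, the dual cone of the preimage ψ⁻¹(C) equals the image under the adjoint ψ* of the dual cone of C. -/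
/-!
Because `0 ∈ C`, the preimage `ψ⁻¹(C)` contains `ker ψ`, so its dual cone lies in
`(ker ψ)ᗮ = range ψ*`. On that range, `⟪x, ψ* v⟫ = ⟪ψ x, v⟫` and the surjectivity of `ψ`
show that `ψ* v` lies in the dual of `ψ⁻¹(C)` exactly when `v` lies in the dual of `C`.
-/

open RealInnerProductSpace

theorem Submodule.mem_orthogonal_of_forall_inner_nonneg {E : Type*}
    [NormedAddCommGroup E] [InnerProductSpace ℝ E] {K : Submodule ℝ E} {u : E}
    (hu : ∀ x ∈ K, 0 ≤ ⟪x, u⟫) : u ∈ Kᗮ := by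
  intro x hx
  have hneg := hu (-x) (K.neg_mem hx)
  rw [inner_neg_left] at hneg
  exact le_antisymm (by linarith) (hu x hx)

theorem LinearMap.forall_preimage_inner_adjoint_nonneg_iff {E F : Type*}
    [NormedAddCommGroup E] [InnerProductSpace ℝ E] [FiniteDimensional ℝ E]
    [NormedAddCommGroup F] [InnerProductSpace ℝ F] [FiniteDimensional ℝ F]
    {ψ : E →ₗ[ℝ] F} (hψ : Function.Surjective ψ) (C : Set F) (v : F) :
    (∀ x ∈ ψ ⁻¹' C, 0 ≤ ⟪x, LinearMap.adjoint ψ v⟫) ↔ ∀ y ∈ C, 0 ≤ ⟪y, v⟫ := by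
  simp only [LinearMap.adjoint_inner_right, Set.mem_preimage]
  exact (hψ.forall (p := fun y ↦ y ∈ C → 0 ≤ ⟪y, v⟫)).symm

/-- For a surjective linear map `ψ : E → F` of finite-dimensional real inner product
spaces and a set `C ⊆ F` with `0 ∈ C`, the dual cone of `ψ⁻¹(C)` is the image under the
adjoint `ψ*` of the dual cone of `C`. -/
theorem stmt14 {E F : Type*}
    [NormedAddCommGroup E] [InnerProductSpace ℝ E] [FiniteDimensional ℝ E]
    [NormedAddCommGroup F] [InnerProductSpace ℝ F] [FiniteDimensional ℝ F]
    (ψ : E →ₗ[ℝ] F) (hψ : Function.Surjective ψ) (C : Set F) (hC : (0 : F) ∈ C) :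
    {u : E | ∀ x ∈ ψ ⁻¹' C, 0 ≤ ⟪x, u⟫} =
      (LinearMap.adjoint ψ) '' {v : F | ∀ y ∈ C, 0 ≤ ⟪y, v⟫} := by
  ext u
  constructor
  · intro hu
    have hu_orth : u ∈ ψ.kerᗮ := Submodule.mem_orthogonal_of_forall_inner_nonneg
      fun x hx ↦ hu x (by simp [LinearMap.mem_ker.mp hx, hC])
    rw [LinearMap.orthogonal_ker] at hu_orth
    obtain ⟨v, rfl⟩ := hu_orth
    exact ⟨v, (ψ.forall_preimage_inner_adjoint_nonneg_iff hψ C v).mp hu, rfl⟩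
  · rintro ⟨v, hv, rfl⟩
    exact (ψ.forall_preimage_inner_adjoint_nonneg_iff hψ C v).mpr hv
end
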